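/- Let k → A →^ι H →^π B → k be an exact sequence of Hopf algebras over a field k, i.e. ι : A → H is an injective Hopf algebra morphism, π : H → B is a surjective Hopf algebra morphism, and Ker(π) = ι(A)⁺H, where ι(A)⁺H is the linear span of the products ι(a)h with a ∈ A, ε_A(a) = 0, and h ∈ H. Then for any commutative k-algebra R the induced sequence of groups 1 → Alg(B,R) →^{π*} Alg(H,R) →^{ι*} Alg(A,R) is exact; explicitly: (i) the map π* : g ↦ g∘π is injective on algebra morphisms, and (ii) an algebra morphism f : H → R satisfies f ∘ ι = η_R ∘ ε_A if and only if f = g ∘ π for some algebra morphism g : B → R. -/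

import Mathlib

/-!
If `f ∘ ι = η_R ∘ ε_A`, then `f` kills every `ι(a) h` with `ε_A(a) = 0`, hence all of
`ι(A)⁺H = Ker π`, so `f` descends along the surjection `π`. Conversely, `a - ε_A(a) 1` lies in
`A⁺`, so `π ∘ ι = η_B ∘ ε_A` and every `g ∘ π` restricts to the trivial character on `A`.
-/

open Coalgebra

theorem AlgHom.exists_apply_eq_comp_of_ker_le {k A B C : Type*} [CommSemiring k]
    [Ring A] [Ring B] [Ring C] [Algebra k A] [Algebra k B] [Algebra k C]
    {π : A →ₐ[k] B} (hπ : Function.Surjective π) {f : A →ₐ[k] C}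
    (hker : RingHom.ker π ≤ RingHom.ker f) :
    ∃ g : B →ₐ[k] C, ∀ x, f x = g (π x) := by
  let φ := (π : A →+* B).liftOfSurjective hπ ⟨(f : A →+* C), hker⟩
  have hφ (x : A) : φ (π x) = f x := (π : A →+* B).liftOfSurjective_comp_apply hπ _ x
  refine ⟨{ φ with commutes' := fun r => ?_ }, fun x => (hφ x).symm⟩
  simpa using hφ (algebraMap k A r)

theorem map_eq_zero_of_mem_span_counit_mul {k A H R : Type*} [CommSemiring k]
    [AddCommMonoid A] [Module k A] [CoalgebraStruct k A]
    [Semiring H] [Algebra k H] [Semiring R] [Algebra k R]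
    {ι : A → H} {f : H →ₐ[k] R} (hf : ∀ a, f (ι a) = algebraMap k R (counit a)) {z : H}
    (hz : z ∈ Submodule.span k {z : H | ∃ (a : A) (x : H), counit (R := k) a = 0 ∧ z = ι a * x}) :
    f z = 0 := by
  refine (Submodule.span_le (p := LinearMap.ker f.toLinearMap)).mpr ?_ hz
  rintro _ ⟨a, x, ha, rfl⟩
  simp [hf, ha]

theorem apply_apply_eq_algebraMap_counit {k A H B : Type*} [CommRing k]
    [Ring A] [Bialgebra k A] [Ring H] [Algebra k H] [Ring B] [Algebra k B]
    {ι : A →ₐ[k] H} {π : H →ₐ[k] B} (hπι : ∀ a, counit (R := k) a = 0 → π (ι a) = 0) (a : A) :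
    π (ι a) = algebraMap k B (counit a) := by
  have hmem : counit (R := k) (a - counit (R := k) a • 1) = 0 := by
    rw [map_sub, map_smul, Bialgebra.counit_one, smul_eq_mul, mul_one, sub_self]
  have hzero := hπι _ hmem
  rwa [map_sub, map_sub, sub_eq_zero, map_smul, map_smul, map_one, map_one,
    ← Algebra.algebraMap_eq_smul_one] at hzero

theorem hopf_exact_sequence_induces_alg_exact_sequence
    {k : Type*} [Field k] {A H B : Type*}
    [Ring A] [Ring H] [Ring B]
    [HopfAlgebra k A] [HopfAlgebra k H] [HopfAlgebra k B]
    (ι : A →ₐc[k] H) (π : H →ₐc[k] B)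
    (hπ : Function.Surjective π)
    (hker : ∀ h : H, π h = 0 ↔
      h ∈ Submodule.span k {z : H | ∃ (a : A) (x : H),
        Coalgebra.counit (R := k) a = 0 ∧ z = ι a * x})
    (R : Type*) [CommRing R] [Algebra k R] :
    (∀ g g' : B →ₐ[k] R, (∀ x : H, g (π x) = g' (π x)) → g = g') ∧
    (∀ f : H →ₐ[k] R,
      (∀ a : A, f (ι a) = algebraMap k R (Coalgebra.counit (R := k) a)) ↔
      (∃ g : B →ₐ[k] R, ∀ x : H, f x = g (π x))) := by
  refine ⟨fun g g' h => (AlgHom.cancel_right (f := (π : H →ₐ[k] B)) hπ).mp (AlgHom.ext h),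
    fun f => ⟨fun hf => ?_, ?_⟩⟩
  · exact AlgHom.exists_apply_eq_comp_of_ker_le (π := (π : H →ₐ[k] B)) hπ
      fun x hx => map_eq_zero_of_mem_span_counit_mul hf ((hker x).mp hx)
  · rintro ⟨g, hg⟩ a
    have hπι := apply_apply_eq_algebraMap_counit (ι := (ι : A →ₐ[k] H)) (π := (π : H →ₐ[k] B))
      (fun a ha => (hker _).mpr (Submodule.subset_span ⟨a, 1, ha, (mul_one _).symm⟩)) a
    rw [hg, ← AlgHom.commutes g]
    exact congrArg g hπι
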